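/- arXiv:2405.17647 — 4 statements merged into one kernel-verified Lean document; each statement's English description precedes it below -/
import Mathlib

section
/- For every natural number k and every x ∈ (−1,1), the Cauchy principal value of the singular integral of the weighted Chebyshev polynomial of the second kind satisfies PV∫_{−1}^{1} √(1−t²) · U_k(t)/(t−x) dt = −π · T_{k+1}(x), where T_n and U_n are the Chebyshev polynomials of the first and second kind. -/
open MeasureTheory Filter Set Real Polynomial

/-- Cauchy principal value of `∫ f` over `S` with singular point `x`:
the integrals with an `ε`-neighbourhood of `x` removed tend to `I` as `ε → 0⁺`. -/
def IsPVOn (f : ℝ → ℝ) (S : Set ℝ) (x I : ℝ) : Prop :=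
  Tendsto (fun ε : ℝ => ∫ y in S \ Set.Ioo (x - ε) (x + ε), f y)
    (nhdsWithin 0 (Set.Ioi 0)) (nhds I)

namespace PVAux

/-- the weight -/
noncomputable def w (t : ℝ) : ℝ := Real.sqrt (1 - t ^ 2)

/-- auxiliary denominator -/
noncomputable def D (x t : ℝ) : ℝ := 1 - x * t + w x * w t

/-- explicit antiderivative of `√(1-t²)/(t-x)` -/
noncomputable def G (x t : ℝ) : ℝ :=
  w t - x * Real.arcsin t + w x * (Real.log (t - x) - Real.log (D x t))

lemma set_split {x ε : ℝ} (h0 : 0 < ε) (h1 : -1 < x - ε) (h2 : x + ε < 1) :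
    Ioo (-1:ℝ) 1 \ Ioo (x-ε) (x+ε) = Ioc (-1) (x-ε) ∪ Ico (x+ε) 1 := by
  ext t
  simp only [mem_diff, mem_Ioo, mem_union, mem_Ioc, mem_Ico, not_and, not_lt]
  constructor
  · rintro ⟨⟨ht1, ht2⟩, h⟩
    rcases le_or_gt t (x-ε) with h'|h'
    · exact Or.inl ⟨ht1, h'⟩
    · exact Or.inr ⟨h h', ht2⟩
  · rintro (⟨ht1, ht2⟩|⟨ht1, ht2⟩)
    · exact ⟨⟨ht1, by linarith⟩, fun hc => by linarith⟩
    · exact ⟨⟨by linarith, ht2⟩, fun hc => by linarith⟩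

lemma integrableOn_split {x : ℝ} {f : ℝ → ℝ}
    (hf : ContinuousOn f (Icc (-1:ℝ) 1 \ {x})) {ε : ℝ} (hε : 0 < ε) :
    IntegrableOn f (Ioo (-1:ℝ) 1 \ Ioo (x-ε) (x+ε)) := by
  have hK : IsCompact (Icc (-1:ℝ) 1 \ Ioo (x-ε) (x+ε)) := isCompact_Icc.diff isOpen_Ioo
  have hsub : Icc (-1:ℝ) 1 \ Ioo (x-ε) (x+ε) ⊆ Icc (-1:ℝ) 1 \ {x} := by
    rintro t ⟨h1, h2⟩
    refine ⟨h1, ?_⟩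
    simp only [mem_singleton_iff]
    rintro rfl
    exact h2 ⟨by linarith, by linarith⟩
  exact (((hf.mono hsub).integrableOn_compact hK)).mono_set
    (diff_subset_diff_left Ioo_subset_Icc_self)

/-- PV of a function integrable on the interval is just its integral. -/
lemma isPVOn_of_integrableOn {g : ℝ → ℝ} {x : ℝ}
    (hg : IntegrableOn g (Ioo (-1:ℝ) 1)) :
    IsPVOn g (Ioo (-1) 1) x (∫ t in Ioo (-1:ℝ) 1, g t) := by
  set g' : ℝ → ℝ := (Ioo (-1:ℝ) 1).indicator g with hg'def
  have hgi : Integrable g' := (integrable_indicator_iff measurableSet_Ioo).2 hg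
  have hii : ∀ a b : ℝ, IntervalIntegrable g' volume a b := fun a b => hgi.intervalIntegrable
  have hcont : Continuous fun u => ∫ t in x..u, g' t := intervalIntegral.continuous_primitive hii x
  have key : ∀ ε : ℝ, 0 < ε →
      ∫ y in Ioo (-1:ℝ) 1 \ Ioo (x-ε) (x+ε), g y
        = (∫ t in Ioo (-1:ℝ) 1, g t)
          - ((∫ t in x..(x+ε), g' t) - (∫ t in x..(x-ε), g' t)) := by
    intro ε hε
    have h1 : ∫ y in Ioo (-1:ℝ) 1 \ Ioo (x-ε) (x+ε), g y
        = ∫ y in Ioo (-1:ℝ) 1 \ (Ioo (-1:ℝ) 1 ∩ Ioo (x-ε) (x+ε)), g y := by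
      rw [Set.diff_self_inter]
    rw [h1, integral_diff (measurableSet_Ioo.inter measurableSet_Ioo) hg inter_subset_left]
    have h2 : ∫ y in Ioo (-1:ℝ) 1 ∩ Ioo (x-ε) (x+ε), g y = ∫ y in Ioo (x-ε) (x+ε), g' y := by
      rw [hg'def, setIntegral_indicator measurableSet_Ioo, Set.inter_comm]
    have h3 : ∫ y in Ioo (x-ε) (x+ε), g' y
        = (∫ t in x..(x+ε), g' t) - (∫ t in x..(x-ε), g' t) := by
      rw [← MeasureTheory.integral_Ioc_eq_integral_Ioo,
        ← intervalIntegral.integral_of_le (by linarith : x - ε ≤ x + ε),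
        ← intervalIntegral.integral_add_adjacent_intervals (hii (x-ε) x) (hii x (x+ε)),
        intervalIntegral.integral_symm x (x-ε)]
      ring
    rw [h2, h3]
  have c1 : Continuous fun ε : ℝ => (∫ t in x..(x+ε), g' t) := hcont.comp (by continuity)
  have c2 : Continuous fun ε : ℝ => (∫ t in x..(x-ε), g' t) := hcont.comp (by continuity)
  have hT : Tendsto (fun ε : ℝ => (∫ t in Ioo (-1:ℝ) 1, g t)
      - ((∫ t in x..(x+ε), g' t) - (∫ t in x..(x-ε), g' t)))
      (nhdsWithin 0 (Ioi 0)) (nhds (∫ t in Ioo (-1:ℝ) 1, g t)) := by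
    have hc0 : Continuous fun _ : ℝ => (∫ t in Ioo (-1:ℝ) 1, g t) := continuous_const
    have := ((hc0.sub (c1.sub c2)).tendsto 0).mono_left
      (nhdsWithin_le_nhds (s := Ioi (0:ℝ)))
    simp at this; exact this
  refine Tendsto.congr' ?_ hT
  filter_upwards [self_mem_nhdsWithin] with ε (hε : 0 < ε)
  exact (key ε hε).symm

lemma isPVOn_congr {f g : ℝ → ℝ} {x I : ℝ}
    (h : ∀ t ∈ Ioo (-1:ℝ) 1, t ≠ x → f t = g t)
    (hg : IsPVOn g (Ioo (-1) 1) x I) : IsPVOn f (Ioo (-1) 1) x I := by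
  refine hg.congr' ?_
  filter_upwards [self_mem_nhdsWithin] with ε (hε : 0 < ε)
  refine setIntegral_congr_fun (measurableSet_Ioo.diff measurableSet_Ioo) ?_
  rintro t ⟨ht1, ht2⟩
  exact (h t ht1 fun hc => ht2 (by rw [hc]; exact ⟨by linarith, by linarith⟩)).symm

lemma isPVOn_add {f g : ℝ → ℝ} {x I J : ℝ}
    (hf : IsPVOn f (Ioo (-1) 1) x I) (hg : IsPVOn g (Ioo (-1) 1) x J)
    (hfi : ∀ ε : ℝ, 0 < ε → IntegrableOn f (Ioo (-1:ℝ) 1 \ Ioo (x-ε) (x+ε)))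
    (hgi : ∀ ε : ℝ, 0 < ε → IntegrableOn g (Ioo (-1:ℝ) 1 \ Ioo (x-ε) (x+ε))) :
    IsPVOn (fun t => f t + g t) (Ioo (-1) 1) x (I + J) := by
  refine (hf.add hg).congr' ?_
  filter_upwards [self_mem_nhdsWithin] with ε (hε : 0 < ε)
  exact (integral_add (hfi ε hε) (hgi ε hε)).symm

lemma isPVOn_const_mul {f : ℝ → ℝ} {x I : ℝ} (c : ℝ)
    (hf : IsPVOn f (Ioo (-1) 1) x I) :
    IsPVOn (fun t => c * f t) (Ioo (-1) 1) x (c * I) := by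
  have := hf.const_mul c
  refine this.congr fun ε => ?_
  rw [MeasureTheory.integral_const_mul]

lemma integral_cos_mul_eq {c : ℝ} (hc : c ≠ 0) :
    ∫ θ in (0:ℝ)..π, Real.cos (c*θ) = Real.sin (c*π)/c := by
  have h := intervalIntegral.mul_integral_comp_mul_left (a := (0:ℝ)) (b := π)
    (f := Real.cos) c
  rw [integral_cos, mul_zero, Real.sin_zero, sub_zero] at h
  rw [eq_div_iff hc, mul_comm]
  exact h

lemma moment (n : ℕ) :
    ∫ t in Ioo (-1:ℝ) 1, Real.sqrt (1 - t ^ 2) * (Chebyshev.U ℝ n).eval t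
      = if n = 0 then π/2 else 0 := by
  have hg : Continuous fun t : ℝ => Real.sqrt (1 - t ^ 2) * (Chebyshev.U ℝ n).eval t :=
    ((continuous_const.sub (continuous_pow 2)).sqrt).mul
      (Polynomial.continuous_aeval (Chebyshev.U ℝ n))
  have h1 : ∫ t in Ioo (-1:ℝ) 1, Real.sqrt (1 - t ^ 2) * (Chebyshev.U ℝ n).eval t
      = ∫ t in (-1:ℝ)..1, Real.sqrt (1 - t ^ 2) * (Chebyshev.U ℝ n).eval t := by
    rw [intervalIntegral.integral_of_le (by norm_num : (-1:ℝ) ≤ 1),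
      MeasureTheory.integral_Ioc_eq_integral_Ioo]
  have h2 : ∫ θ in (π:ℝ)..0, (-Real.sin θ) •
        ((fun t => Real.sqrt (1 - t ^ 2) * (Chebyshev.U ℝ n).eval t) ∘ Real.cos) θ
      = ∫ t in Real.cos π..Real.cos 0, Real.sqrt (1 - t ^ 2) * (Chebyshev.U ℝ n).eval t :=
    intervalIntegral.integral_comp_smul_deriv (fun θ _ => Real.hasDerivAt_cos θ)
      Real.continuous_sin.neg.continuousOn hg
  rw [Real.cos_pi, Real.cos_zero] at h2
  have h3 : ∫ θ in (π:ℝ)..0, (-Real.sin θ) •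
        ((fun t => Real.sqrt (1 - t ^ 2) * (Chebyshev.U ℝ n).eval t) ∘ Real.cos) θ
      = ∫ θ in (0:ℝ)..π,
          Real.sin θ * (Real.sqrt (1 - Real.cos θ ^ 2) * (Chebyshev.U ℝ n).eval (Real.cos θ)) := by
    rw [intervalIntegral.integral_symm]
    rw [← intervalIntegral.integral_neg]
    congr 1 with θ
    simp [Function.comp]
  have h4 : ∫ θ in (0:ℝ)..π,
        Real.sin θ * (Real.sqrt (1 - Real.cos θ ^ 2) * (Chebyshev.U ℝ n).eval (Real.cos θ))
      = ∫ θ in (0:ℝ)..π,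
          (Real.cos ((n:ℝ)*θ) - Real.cos (((n:ℝ)+2)*θ))/2 := by
    refine intervalIntegral.integral_congr fun θ hθ => ?_
    rw [Set.uIcc_of_le Real.pi_nonneg] at hθ
    have hsin : 0 ≤ Real.sin θ := Real.sin_nonneg_of_nonneg_of_le_pi hθ.1 hθ.2
    have hsq : Real.sqrt (1 - Real.cos θ ^ 2) = Real.sin θ := by
      rw [← Real.sin_sq, Real.sqrt_sq hsin]
    have hU := Polynomial.Chebyshev.U_real_cos θ n
    have h5 := Real.two_mul_sin_mul_sin θ (((n:ℝ)+1)*θ)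
    have e1 : θ - ((n:ℝ)+1)*θ = -((n:ℝ)*θ) := by ring
    have e2 : θ + ((n:ℝ)+1)*θ = ((n:ℝ)+2)*θ := by ring
    rw [e1, e2, Real.cos_neg] at h5
    have e3 : ((n:ℤ):ℝ) + 1 = ((n:ℝ)+1) := by push_cast; ring
    rw [e3] at hU
    simp only [hsq]
    rw [show Real.sin θ * (Real.sin θ * (Chebyshev.U ℝ (n:ℤ)).eval (Real.cos θ))
        = Real.sin θ * ((Chebyshev.U ℝ (n:ℤ)).eval (Real.cos θ) * Real.sin θ) by ring, hU]
    linarith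
  have i1 : IntervalIntegrable (fun θ => Real.cos ((n:ℝ)*θ)) volume 0 π :=
    (Real.continuous_cos.comp (continuous_const.mul continuous_id)).intervalIntegrable _ _
  have i2 : IntervalIntegrable (fun θ => Real.cos (((n:ℝ)+2)*θ)) volume 0 π :=
    (Real.continuous_cos.comp (continuous_const.mul continuous_id)).intervalIntegrable _ _
  have h6 : ∫ θ in (0:ℝ)..π, (Real.cos ((n:ℝ)*θ) - Real.cos (((n:ℝ)+2)*θ))/2
      = ((∫ θ in (0:ℝ)..π, Real.cos ((n:ℝ)*θ)) - ∫ θ in (0:ℝ)..π, Real.cos (((n:ℝ)+2)*θ))/2 := by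
    rw [intervalIntegral.integral_div, intervalIntegral.integral_sub i1 i2]
  have hc2 : ∫ θ in (0:ℝ)..π, Real.cos (((n:ℝ)+2)*θ) = 0 := by
    rw [integral_cos_mul_eq (by positivity : ((n:ℝ)+2) ≠ 0)]
    have : ((n:ℝ)+2)*π = ((n+2 : ℕ):ℝ)*π := by push_cast; ring
    rw [this, Real.sin_nat_mul_pi, zero_div]
  rw [h1, ← h2, h3, h4, h6, hc2]
  rcases Nat.eq_zero_or_pos n with hn | hn
  · subst hn
    norm_num
  · have hc1 : ∫ θ in (0:ℝ)..π, Real.cos ((n:ℝ)*θ) = 0 := by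
      rw [integral_cos_mul_eq (by positivity : ((n:ℝ)) ≠ 0)]
      rw [Real.sin_nat_mul_pi, zero_div]
    rw [hc1, if_neg hn.ne']
    norm_num

section Base

variable {x : ℝ} (hx1 : -1 < x) (hx2 : x < 1)

lemma one_sub_sq_pos {t : ℝ} (h1 : -1 < t) (h2 : t < 1) : 0 < 1 - t ^ 2 := by nlinarith

lemma w_pos {t : ℝ} (h1 : -1 < t) (h2 : t < 1) : 0 < w t :=
  Real.sqrt_pos.2 (one_sub_sq_pos h1 h2)

lemma w_sq {t : ℝ} (h1 : -1 < t) (h2 : t < 1) : w t ^ 2 = 1 - t ^ 2 :=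
  Real.sq_sqrt (one_sub_sq_pos h1 h2).le

include hx1 hx2 in
lemma D_pos : ∀ t ∈ Icc (-1:ℝ) 1, 0 < D x t := by
  intro t ht
  have h1 : x * t ≤ |x| := by
    calc x * t ≤ |x * t| := le_abs_self _
    _ = |x| * |t| := abs_mul x t
    _ ≤ |x| * 1 := by
        refine mul_le_mul_of_nonneg_left ?_ (abs_nonneg x)
        exact abs_le.2 ⟨ht.1, ht.2⟩
    _ = |x| := mul_one _
  have h2 : |x| < 1 := abs_lt.2 ⟨hx1, hx2⟩
  have h3 : (0:ℝ) ≤ w x * w t := mul_nonneg (Real.sqrt_nonneg _) (Real.sqrt_nonneg _)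
  unfold D
  linarith

lemma continuous_w : Continuous w :=
  (continuous_const.sub (continuous_pow 2)).sqrt

lemma continuous_D : Continuous (D x) :=
  ((continuous_const.sub (continuous_const.mul continuous_id)).add
    (continuous_const.mul continuous_w))

include hx1 hx2 in
lemma G_deriv : ∀ t ∈ Ioo (-1:ℝ) 1, t ≠ x →
    HasDerivAt (G x) (Real.sqrt (1 - t ^ 2) / (t - x)) t := by
  intro t ht htx
  obtain ⟨ht1, ht2⟩ := ht
  have hwt : 0 < w t := w_pos ht1 ht2
  have hwx : 0 < w x := w_pos hx1 hx2
  have hwt2 : w t ^ 2 = 1 - t ^ 2 := w_sq ht1 ht2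
  have hwx2 : w x ^ 2 = 1 - x ^ 2 := w_sq hx1 hx2
  have hne : (1 : ℝ) - t ^ 2 ≠ 0 := (one_sub_sq_pos ht1 ht2).ne'
  have htx' : t - x ≠ 0 := sub_ne_zero.2 htx
  have hD : 0 < D x t := D_pos hx1 hx2 t ⟨ht1.le, ht2.le⟩
  -- pieces
  have h0 : HasDerivAt (fun u : ℝ => 1 - u ^ 2) (-(2 * t ^ 1)) t := by
    simpa using (hasDerivAt_pow 2 t).const_sub 1
  have hA : HasDerivAt w (1 / (2 * w t) * -(2 * t ^ 1)) t :=
    (Real.hasDerivAt_sqrt hne).comp t h0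
  have hB : HasDerivAt (fun u => x * Real.arcsin u) (x * (1 / Real.sqrt (1 - t ^ 2))) t :=
    (Real.hasDerivAt_arcsin ht1.ne' ht2.ne).const_mul x
  have hC : HasDerivAt (fun u : ℝ => Real.log (u - x)) ((t - x)⁻¹ * 1) t :=
    HasDerivAt.comp (h₂ := Real.log) t (Real.hasDerivAt_log htx') ((hasDerivAt_id' t).sub_const x)
  have hlin : HasDerivAt (fun u : ℝ => 1 - x * u) (-(x * 1)) t := by
    simpa using ((hasDerivAt_id t).const_mul x).const_sub 1
  have hDd : HasDerivAt (D x) (-(x * 1) + w x * (1 / (2 * w t) * -(2 * t ^ 1))) t :=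
    hlin.add (hA.const_mul (w x))
  have hE : HasDerivAt (fun u => Real.log (D x u))
      ((D x t)⁻¹ * (-(x * 1) + w x * (1 / (2 * w t) * -(2 * t ^ 1)))) t :=
    (Real.hasDerivAt_log hD.ne').comp t hDd
  have hG : HasDerivAt (G x)
      (1 / (2 * w t) * -(2 * t ^ 1) - x * (1 / Real.sqrt (1 - t ^ 2))
        + w x * ((t - x)⁻¹ * 1
          - (D x t)⁻¹ * (-(x * 1) + w x * (1 / (2 * w t) * -(2 * t ^ 1))))) t :=
    (hA.sub hB).add ((hC.sub hE).const_mul (w x))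
  convert hG using 1
  have hwD : D x t = 1 - x * t + w x * w t := rfl
  have hsqrt : Real.sqrt (1 - t ^ 2) = w t := rfl
  rw [hsqrt]
  rw [hwD]
  have hDne : 1 - x * t + w x * w t ≠ 0 := by rw [← hwD]; exact hD.ne'
  field_simp
  have hD' : 1 - t * x + w t * w x ≠ 0 := by
    rw [show 1 - t * x + w t * w x = D x t by rw [hwD]; ring]; exact hD.ne'
  have hq : (t - x) * (-(w t * x) + -(t * w x)) / (1 - t * x + w t * w x) = w t - w x := by
    rw [div_eq_iff hD']
    linear_combination w t * hwx2 - w x * hwt2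
  rw [hq]
  linear_combination hwt2 - hwx2

include hx1 hx2 in
lemma G_cont : ContinuousOn (G x) (Icc (-1:ℝ) 1 \ {x}) := by
  unfold G
  refine (((continuous_w.continuousOn).sub
    (continuous_const.mul Real.continuous_arcsin).continuousOn).add
    (continuousOn_const.mul (ContinuousOn.sub ?_ ?_)))
  · intro t ht
    have htx : t ≠ x := by simpa using ht.2
    have hsub : ContinuousAt (fun u : ℝ => u - x) t :=
      (continuous_id.sub continuous_const).continuousAt
    have hct : ContinuousAt (fun u : ℝ => Real.log (u - x)) t :=
      ContinuousAt.comp (f := fun u : ℝ => u - x) (x := t)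
        (Real.continuousAt_log (sub_ne_zero.2 htx)) hsub
    exact hct.continuousWithinAt
  · intro t ht
    exact ((Real.continuousAt_log (D_pos hx1 hx2 t ht.1).ne').comp
      (continuous_D.continuousAt)).continuousWithinAt

include hx1 hx2 in
lemma isPVOn_base :
    IsPVOn (fun t => Real.sqrt (1 - t ^ 2) / (t - x)) (Ioo (-1) 1) x (-π * x) := by
  set h : ℝ → ℝ := fun t => Real.sqrt (1 - t ^ 2) / (t - x) with hh
  set ψ : ℝ → ℝ := fun ε => (G x 1 - G x (-1)) + ((w (x-ε) - w (x+ε))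
      - x * (Real.arcsin (x-ε) - Real.arcsin (x+ε))
      + w x * (Real.log (D x (x+ε)) - Real.log (D x (x-ε)))) with hψ
  have hδ : 0 < min (x+1) (1-x) := lt_min (by linarith) (by linarith)
  have key : ∀ ε ∈ Ioo (0:ℝ) (min (x+1) (1-x)),
      ∫ y in Ioo (-1:ℝ) 1 \ Ioo (x-ε) (x+ε), h y = ψ ε := by
    intro ε hε
    obtain ⟨hε0, hεδ⟩ := hε
    have hεa : ε < x + 1 := lt_of_lt_of_le hεδ (min_le_left _ _)
    have hεb : ε < 1 - x := lt_of_lt_of_le hεδ (min_le_right _ _)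
    have hxa : -1 < x - ε := by linarith
    have hxb : x + ε < 1 := by linarith
    have hcl : ContinuousOn h (Icc (-1:ℝ) (x-ε)) := by
      refine ContinuousOn.div (continuous_w.continuousOn) ?_ ?_
      · exact (continuous_id.sub continuous_const).continuousOn
      · intro t ht
        have : t ≤ x - ε := ht.2
        intro hc
        have : t = x := by linarith [sub_eq_zero.1 hc]
        linarith [sub_eq_zero.1 hc, ht.2]
    have hcr : ContinuousOn h (Icc (x+ε) (1:ℝ)) := by
      refine ContinuousOn.div (continuous_w.continuousOn) ?_ ?_
      · exact (continuous_id.sub continuous_const).continuousOn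
      · intro t ht hc
        have := sub_eq_zero.1 hc
        have := ht.1
        linarith
    have ftc1 : ∫ t in (-1:ℝ)..(x-ε), h t = G x (x-ε) - G x (-1) := by
      refine intervalIntegral.integral_eq_sub_of_hasDerivAt_of_le (by linarith) ?_ ?_ ?_
      · refine (G_cont hx1 hx2).mono ?_
        intro t ht
        exact ⟨⟨ht.1, by linarith [ht.2]⟩, by simp; intro hc; subst hc; linarith [ht.2]⟩
      · intro t ht
        exact G_deriv hx1 hx2 t ⟨ht.1, by linarith [ht.2]⟩ (by intro hc; subst hc; linarith [ht.2])
      · exact (hcl.mono (by rw [uIcc_of_le (by linarith)])).intervalIntegrable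
    have ftc2 : ∫ t in (x+ε)..(1:ℝ), h t = G x 1 - G x (x+ε) := by
      refine intervalIntegral.integral_eq_sub_of_hasDerivAt_of_le (by linarith) ?_ ?_ ?_
      · refine (G_cont hx1 hx2).mono ?_
        intro t ht
        exact ⟨⟨by linarith [ht.1], ht.2⟩, by simp; intro hc; subst hc; linarith [ht.1]⟩
      · intro t ht
        exact G_deriv hx1 hx2 t ⟨by linarith [ht.1], ht.2⟩ (by intro hc; subst hc; linarith [ht.1])
      · exact (hcr.mono (by rw [uIcc_of_le (by linarith)])).intervalIntegrable
    have hsplit := set_split (x := x) (ε := ε) hε0 hxa hxb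
    have hint1 : IntegrableOn h (Ioc (-1:ℝ) (x-ε)) :=
      (ContinuousOn.integrableOn_compact isCompact_Icc hcl).mono_set Ioc_subset_Icc_self
    have hint2 : IntegrableOn h (Ico (x+ε) (1:ℝ)) :=
      (ContinuousOn.integrableOn_compact isCompact_Icc hcr).mono_set Ico_subset_Icc_self
    have hdisj : Disjoint (Ioc (-1:ℝ) (x-ε)) (Ico (x+ε) 1) := by
      refine Set.disjoint_left.2 fun t ht1 ht2 => ?_
      have h1 := ht1.2
      have h2 := ht2.1
      linarith
    rw [hsplit, setIntegral_union hdisj measurableSet_Ico hint1 hint2]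
    have e1 : ∫ t in Ioc (-1:ℝ) (x-ε), h t = ∫ t in (-1:ℝ)..(x-ε), h t := by
      rw [intervalIntegral.integral_of_le (by linarith : (-1:ℝ) ≤ x - ε)]
    have e2 : ∫ t in Ico (x+ε) (1:ℝ), h t = ∫ t in (x+ε)..(1:ℝ), h t := by
      rw [MeasureTheory.integral_Ico_eq_integral_Ioo,
        ← MeasureTheory.integral_Ioc_eq_integral_Ioo,
        intervalIntegral.integral_of_le (by linarith : x + ε ≤ 1)]
    rw [e1, e2, ftc1, ftc2]
    have hGsub : G x (x-ε) - G x (x+ε) = (w (x-ε) - w (x+ε))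
        - x * (Real.arcsin (x-ε) - Real.arcsin (x+ε))
        + w x * (Real.log (D x (x+ε)) - Real.log (D x (x-ε))) := by
      unfold G
      have l1 : x - ε - x = -ε := by ring
      have l2 : x + ε - x = ε := by ring
      rw [l1, l2, Real.log_neg_eq_log]
      ring
    simp only [hψ]
    linarith [hGsub]
  -- limit of ψ
  have hDxx : 0 < D x x := D_pos hx1 hx2 x ⟨hx1.le, hx2.le⟩
  have c1 : Continuous fun ε : ℝ => x - ε := continuous_const.sub continuous_id
  have c2 : Continuous fun ε : ℝ => x + ε := continuous_const.add continuous_id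
  have hlog1 : ContinuousAt (fun ε : ℝ => Real.log (D x (x+ε))) 0 := by
    have hc : ContinuousAt (fun ε : ℝ => D x (x+ε)) 0 := (continuous_D.comp c2).continuousAt
    refine (Real.continuousAt_log ?_).comp hc
    simpa using hDxx.ne'
  have hlog2 : ContinuousAt (fun ε : ℝ => Real.log (D x (x-ε))) 0 := by
    have hc : ContinuousAt (fun ε : ℝ => D x (x-ε)) 0 := (continuous_D.comp c1).continuousAt
    refine (Real.continuousAt_log ?_).comp hc
    simpa using hDxx.ne'
  have hψc : ContinuousAt ψ 0 := by
    refine continuousAt_const.add ?_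
    refine ContinuousAt.add (ContinuousAt.sub ?_ (continuousAt_const.mul ?_))
      (continuousAt_const.mul (hlog1.sub hlog2))
    · exact (continuous_w.comp c1).continuousAt.sub (continuous_w.comp c2).continuousAt
    · exact (Real.continuous_arcsin.comp c1).continuousAt.sub
        (Real.continuous_arcsin.comp c2).continuousAt
  have hψ0 : ψ 0 = -π * x := by
    have hw1 : w 1 = 0 := by unfold w; norm_num
    have hwm1 : w (-1) = 0 := by unfold w; norm_num
    have hD1 : D x 1 = 1 - x := by unfold D; rw [hw1]; ring
    have hDm1 : D x (-1) = 1 + x := by unfold D; rw [hwm1]; ring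
    have hG1 : G x 1 = -x * (π/2) := by
      unfold G
      rw [hw1, hD1, Real.arcsin_one]
      ring
    have hGm1 : G x (-1) = x * (π/2) := by
      unfold G
      rw [hwm1, hDm1, Real.arcsin_neg_one]
      have l3 : (-1 : ℝ) - x = -(1+x) := by ring
      rw [l3, Real.log_neg_eq_log]
      ring
    simp only [hψ, sub_zero, add_zero, sub_self, mul_zero]
    rw [hG1, hGm1]
    ring
  have hT : Tendsto ψ (nhdsWithin 0 (Ioi 0)) (nhds (-π * x)) := by
    rw [← hψ0]
    exact (hψc.tendsto).mono_left nhdsWithin_le_nhds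
  refine Tendsto.congr' ?_ hT
  filter_upwards [Ioo_mem_nhdsGT_of_mem ⟨le_refl (0:ℝ), hδ⟩] with ε hε
  exact (key ε hε).symm

end Base

end PVAux

open PVAux

/-- Spectral relation for the Hilbert singular operator on weighted Chebyshev
polynomials of the second kind:
`PV∫_{-1}^1 √(1-t²) U_k(t)/(t-x) dt = -π T_{k+1}(x)` for `x ∈ (-1,1)`. -/
theorem pv_integral_weighted_chebyshevU (k : ℕ) (x : ℝ) (hx : x ∈ Set.Ioo (-1:ℝ) 1) :
    IsPVOn (fun t => Real.sqrt (1 - t ^ 2) * (Polynomial.Chebyshev.U ℝ k).eval t / (t - x))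
      (Set.Ioo (-1) 1) x (-π * (Polynomial.Chebyshev.T ℝ (k + 1)).eval x) := by
  obtain ⟨hx1, hx2⟩ := hx
  -- continuity of the singular integrands away from x
  have hWU : ∀ n : ℤ, ContinuousOn
      (fun t => Real.sqrt (1 - t ^ 2) * (Chebyshev.U ℝ n).eval t / (t - x))
      (Icc (-1:ℝ) 1 \ {x}) := by
    intro n
    refine ContinuousOn.div ?_ ?_ ?_
    · exact (((continuous_const.sub (continuous_pow 2)).sqrt).mul
        (Polynomial.continuous_aeval _)).continuousOn
    · exact (continuous_id.sub continuous_const).continuousOn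
    · intro t ht
      exact sub_ne_zero.2 (by simpa using ht.2)
  have hInt : ∀ n : ℤ, ∀ ε : ℝ, 0 < ε →
      IntegrableOn (fun t => Real.sqrt (1 - t ^ 2) * (Chebyshev.U ℝ n).eval t / (t - x))
        (Ioo (-1:ℝ) 1 \ Ioo (x-ε) (x+ε)) :=
    fun n ε hε => integrableOn_split (hWU n) hε
  have hRegCont : ∀ n : ℤ, Continuous
      (fun t : ℝ => Real.sqrt (1 - t ^ 2) * (Chebyshev.U ℝ n).eval t) := fun n =>
    ((continuous_const.sub (continuous_pow 2)).sqrt).mul (Polynomial.continuous_aeval _)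
  have hRegInt : ∀ n : ℤ, IntegrableOn
      (fun t : ℝ => Real.sqrt (1 - t ^ 2) * (Chebyshev.U ℝ n).eval t) (Ioo (-1:ℝ) 1) :=
    fun n => (ContinuousOn.integrableOn_compact isCompact_Icc
      (hRegCont n).continuousOn).mono_set Ioo_subset_Icc_self
  have hreg : ∀ n : ℤ, IsPVOn (fun t : ℝ => Real.sqrt (1 - t ^ 2) * (Chebyshev.U ℝ n).eval t)
      (Ioo (-1) 1) x (∫ t in Ioo (-1:ℝ) 1, Real.sqrt (1 - t ^ 2) * (Chebyshev.U ℝ n).eval t) :=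
    fun n => isPVOn_of_integrableOn (hRegInt n)
  have hbase := isPVOn_base hx1 hx2
  induction k using Nat.twoStepInduction with
  | zero =>
    have e : -π * (Chebyshev.T ℝ ((0:ℕ) + 1)).eval x = -π * x := by
      norm_num [Chebyshev.T_one]
    rw [e]
    refine isPVOn_congr (fun t ht htx => ?_) hbase
    norm_num [Chebyshev.U_zero]
  | one =>
    have h0 : IsPVOn (fun t : ℝ => 2 * (Real.sqrt (1 - t ^ 2) * (Chebyshev.U ℝ 0).eval t))
        (Ioo (-1) 1) x (2 * (π/2)) := by
      have := isPVOn_const_mul 2 (hreg 0)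
      have e : (2:ℝ) * (∫ t in Ioo (-1:ℝ) 1, Real.sqrt (1 - t ^ 2) * (Chebyshev.U ℝ 0).eval t)
          = 2 * (π/2) := by
        have hm := moment 0
        norm_num at hm ⊢
        exact hm
      rwa [e] at this
    have h1 : IsPVOn (fun t : ℝ => 2 * x * (Real.sqrt (1 - t ^ 2) / (t - x)))
        (Ioo (-1) 1) x (2 * x * (-π * x)) := isPVOn_const_mul (2*x) hbase
    have hBaseCont : ContinuousOn (fun t : ℝ => Real.sqrt (1 - t ^ 2) / (t - x))
        (Icc (-1:ℝ) 1 \ {x}) := by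
      refine ContinuousOn.div
        ((continuous_const.sub (continuous_pow 2)).sqrt).continuousOn
        (continuous_id.sub continuous_const).continuousOn ?_
      intro t ht
      exact sub_ne_zero.2 (by simpa using ht.2)
    have hsum := isPVOn_add h0 h1
      (fun ε hε => integrableOn_split (continuousOn_const.mul (hRegCont 0).continuousOn) hε)
      (fun ε hε => integrableOn_split (continuousOn_const.mul hBaseCont) hε)
    have e2 : 2 * (π/2) + 2 * x * (-π * x) = -π * (Chebyshev.T ℝ ((1:ℕ) + 1)).eval x := by
      norm_num [Chebyshev.T_two]
      ring
    rw [← e2]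
    refine isPVOn_congr (fun t ht htx => ?_) hsum
    have htx' : t - x ≠ 0 := sub_ne_zero.2 htx
    norm_num [Chebyshev.U_one]
    field_simp
    ring
  | more k ih0 ih1 =>
    have Hk := ih0
    have Hk1 := ih1
    -- the regular middle term has integral 0
    have hmid : IsPVOn (fun t : ℝ => 2 * (Real.sqrt (1 - t ^ 2) * (Chebyshev.U ℝ (k+1 : ℕ)).eval t))
        (Ioo (-1) 1) x 0 := by
      have h := isPVOn_const_mul 2 (hreg ((k+1 : ℕ) : ℤ))
      have e : (2:ℝ) * (∫ t in Ioo (-1:ℝ) 1,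
          Real.sqrt (1 - t ^ 2) * (Chebyshev.U ℝ ((k+1:ℕ):ℤ)).eval t) = 0 := by
        rw [moment (k+1)]
        simp
      rwa [e] at h
    have hcomb := isPVOn_add hmid
      (isPVOn_add (isPVOn_const_mul (2*x) Hk1) (isPVOn_const_mul (-1) Hk)
        (fun ε hε => (hInt _ ε hε).const_mul _) (fun ε hε => (hInt _ ε hε).const_mul _))
      (fun ε hε => integrableOn_split
        (continuousOn_const.mul (hRegCont ((k+1:ℕ):ℤ)).continuousOn) hε)
      (fun ε hε => ((hInt _ ε hε).const_mul (2*x)).add ((hInt _ ε hε).const_mul (-1)))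
    have e3 : (0 : ℝ) + (2 * x * (-π * (Chebyshev.T ℝ ((k+1:ℕ) + 1)).eval x)
          + -1 * (-π * (Chebyshev.T ℝ ((k:ℕ) + 1)).eval x))
        = -π * (Chebyshev.T ℝ ((k+2:ℕ) + 1)).eval x := by
      have hT' : Chebyshev.T ℝ (((k:ℤ)+1) + 2) = 2 * Polynomial.X * Chebyshev.T ℝ ((k:ℤ)+1+1)
          - Chebyshev.T ℝ ((k:ℤ)+1) := Chebyshev.T_add_two ℝ _
      have c1 : (((k+2:ℕ):ℤ) + 1) = ((k:ℤ)+1) + 2 := by push_cast; ring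
      have c2 : (((k+1:ℕ):ℤ) + 1) = ((k:ℤ)+1) + 1 := by push_cast; ring
      have c3 : (((k:ℕ):ℤ) + 1) = ((k:ℤ)+1) := by norm_num
      rw [c1, c2, c3, hT']
      simp [Polynomial.eval_sub, Polynomial.eval_mul]
      ring
    rw [← e3]
    refine isPVOn_congr (fun t ht htx => ?_) hcomb
    have htx' : t - x ≠ 0 := sub_ne_zero.2 htx
    have hU : (Chebyshev.U ℝ (((k+2:ℕ)):ℤ)).eval t
        = 2 * t * (Chebyshev.U ℝ (((k+1:ℕ)):ℤ)).eval t - (Chebyshev.U ℝ ((k:ℕ):ℤ)).eval t := by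
      have c1 : (((k+2:ℕ)):ℤ) = ((k:ℤ)) + 2 := by push_cast; ring
      have c2 : (((k+1:ℕ)):ℤ) = ((k:ℤ)) + 1 := by push_cast; ring
      rw [c1, c2, Chebyshev.U_add_two]
      simp [Polynomial.eval_sub, Polynomial.eval_mul]
    rw [hU]
    field_simp
    ring
end

section
/- For every natural number m ≥ 1 and every x ∈ (−1,1), the Cauchy principal value of the singular integral of the weighted Chebyshev polynomial of the first kind satisfies PV∫_{−1}^{1} T_m(t)/(√(1−t²)·(t−x)) dt = π · U_{m−1}(x), where T_n and U_n are the Chebyshev polynomials of the first and second kind. -/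
open MeasureTheory Filter Set Real Polynomial

lemma integrableOn_weight : IntegrableOn (fun t : ℝ => 1 / Real.sqrt (1 - t^2)) (Ioo (-1) 1) volume := by
  have h : IntegrableOn (fun t : ℝ => 1 / Real.sqrt (1 - t^2)) (Ioc (-1:ℝ) 1) volume := by
    apply intervalIntegral.integrableOn_deriv_of_nonneg (g := Real.arcsin)
    · exact Real.continuous_arcsin.continuousOn
    · intro t ht; exact Real.hasDerivAt_arcsin ht.1.ne' ht.2.ne
    · intro t ht; positivity
  exact h.mono_set Ioo_subset_Ioc_self

lemma integrableOn_poly_div_weight (p : Polynomial ℝ) :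
    IntegrableOn (fun t : ℝ => p.eval t / Real.sqrt (1 - t^2)) (Ioo (-1) 1) volume := by
  obtain ⟨C, hC⟩ := (isCompact_Icc (a := (-1:ℝ)) (b := 1)).exists_bound_of_continuousOn
    p.continuous.continuousOn
  apply Integrable.mono ((integrableOn_weight.const_mul (max C 0)))
  · exact (p.continuous.measurable.div
      ((Real.continuous_sqrt.comp (by continuity)).measurable)).aestronglyMeasurable
  · rw [ae_restrict_iff' measurableSet_Ioo]
    filter_upwards with t ht
    have h1 : (0:ℝ) < 1 - t^2 := by nlinarith [ht.1, ht.2]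
    have hs : 0 < Real.sqrt (1 - t^2) := Real.sqrt_pos.2 h1
    have hb : |p.eval t| ≤ max C 0 := le_trans (hC t ⟨ht.1.le, ht.2.le⟩) (le_max_left _ _)
    rw [Real.norm_eq_abs, Real.norm_eq_abs, abs_div, abs_of_pos hs, abs_mul]
    rw [abs_of_nonneg (le_max_right C 0), abs_of_nonneg (by positivity : (0:ℝ) ≤ 1/Real.sqrt (1-t^2))]
    rw [div_le_iff₀ hs, one_div, mul_assoc, inv_mul_cancel₀ hs.ne', mul_one]
    exact hb

lemma integral_weight : ∫ t in Ioo (-1:ℝ) 1, 1 / Real.sqrt (1 - t^2) = π := by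
  rw [← integral_Ioc_eq_integral_Ioo, ← intervalIntegral.integral_of_le (by norm_num : (-1:ℝ) ≤ 1)]
  rw [intervalIntegral.integral_eq_sub_of_hasDerivAt_of_le (by norm_num)
    Real.continuous_arcsin.continuousOn
    (fun t ht => Real.hasDerivAt_arcsin ht.1.ne' ht.2.ne)
    (by
      rw [intervalIntegrable_iff_integrableOn_Ioo_of_le (by norm_num)]
      exact integrableOn_weight)]
  rw [Real.arcsin_one, Real.arcsin_neg_one]; ring

lemma integral_T (n : ℕ) (hn : 1 ≤ n) :
    ∫ t in Ioo (-1:ℝ) 1, (Polynomial.Chebyshev.T ℝ n).eval t / Real.sqrt (1 - t^2) = 0 := by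
  have key : ∀ t ∈ Ioo (-1:ℝ) 1, HasDerivAt (fun s => -(1/(n:ℝ)) * Real.sin (n * Real.arccos s))
      ((Polynomial.Chebyshev.T ℝ n).eval t / Real.sqrt (1 - t^2)) t := by
    intro t ht
    have h1 : (0:ℝ) < 1 - t^2 := by nlinarith [ht.1, ht.2]
    have harc : HasDerivAt Real.arccos (-(1 / Real.sqrt (1 - t^2))) t :=
      Real.hasDerivAt_arccos ht.1.ne' ht.2.ne
    have hsin : HasDerivAt (fun s => Real.sin (n * Real.arccos s))
        (Real.cos (n * Real.arccos t) * ((n:ℝ) * -(1 / Real.sqrt (1 - t^2)))) t :=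
      (Real.hasDerivAt_sin _).comp t ((harc.const_mul (n:ℝ)))
    have := hsin.const_mul (-(1/(n:ℝ)))
    refine this.congr_deriv ?_
    have hT : (Polynomial.Chebyshev.T ℝ n).eval t = Real.cos (n * Real.arccos t) := by
      conv_lhs => rw [← Real.cos_arccos ht.1.le ht.2.le]
      exact_mod_cast Polynomial.Chebyshev.T_real_cos (Real.arccos t) n
    rw [hT]
    have hn0 : (n:ℝ) ≠ 0 := Nat.cast_ne_zero.2 (by omega)
    field_simp
  rw [← integral_Ioc_eq_integral_Ioo, ← intervalIntegral.integral_of_le (by norm_num : (-1:ℝ) ≤ 1)]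
  rw [intervalIntegral.integral_eq_sub_of_hasDerivAt_of_le (by norm_num)
    (continuous_const.mul (Real.continuous_sin.comp (continuous_const.mul Real.continuous_arccos))).continuousOn key
    (by
      rw [intervalIntegrable_iff_integrableOn_Ioo_of_le (by norm_num)]
      exact integrableOn_poly_div_weight _)]
  simp [Function.comp, Real.arccos_one, Real.arccos_neg_one, Real.sin_nat_mul_pi]

lemma isPVOn_of_integrableOn {f : ℝ → ℝ} {S : Set ℝ} (hS : MeasurableSet S) (x : ℝ)
    (hf : IntegrableOn f S volume) : IsPVOn f S x (∫ y in S, f y) := by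
  have key : ∀ ε : ℝ, ∫ y in S \ Set.Ioo (x - ε) (x + ε), f y
      = (∫ y in S, f y) - ∫ y in Set.Ioo (x - ε) (x + ε), f y ∂(volume.restrict S) := by
    intro ε
    have h1 : S \ Set.Ioo (x - ε) (x + ε) = S \ (S ∩ Set.Ioo (x - ε) (x + ε)) :=
      (Set.diff_self_inter (s := S)).symm
    rw [h1, MeasureTheory.integral_diff (hS.inter measurableSet_Ioo) hf inter_subset_left,
      Measure.restrict_restrict measurableSet_Ioo, Set.inter_comm]
  simp only [IsPVOn, key]
  have h2 : Tendsto (fun ε : ℝ => ∫ y in Set.Ioo (x - ε) (x + ε), f y ∂(volume.restrict S))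
      (nhdsWithin 0 (Set.Ioi 0)) (nhds 0) := by
    apply hf.tendsto_setIntegral_nhds_zero
    have h3 : Tendsto (fun ε : ℝ => ENNReal.ofReal (2 * ε)) (nhdsWithin 0 (Set.Ioi 0)) (nhds 0) := by
      have ht : Tendsto (fun ε : ℝ => 2 * ε) (nhdsWithin 0 (Set.Ioi 0)) (nhds 0) := by
        have : Continuous (fun ε : ℝ => 2 * ε) := by continuity
        simpa using (this.tendsto 0).mono_left nhdsWithin_le_nhds
      simpa [Function.comp_def] using (ENNReal.continuous_ofReal.tendsto 0).comp ht
    apply tendsto_of_tendsto_of_tendsto_of_le_of_le tendsto_const_nhds h3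
      (fun ε => zero_le)
    intro ε
    calc (volume.restrict S) (Set.Ioo (x - ε) (x + ε)) ≤ volume (Set.Ioo (x - ε) (x + ε)) :=
          Measure.restrict_le_self _
      _ = ENNReal.ofReal (2 * ε) := by rw [Real.volume_Ioo]; ring_nf
  simpa using (tendsto_const_nhds (x := ∫ y in S, f y)).sub h2

lemma integrableOn_sing (p : Polynomial ℝ) (x : ℝ) {ε : ℝ} (hε : 0 < ε) :
    IntegrableOn (fun t : ℝ => p.eval t / (Real.sqrt (1 - t ^ 2) * (t - x)))
      (Ioo (-1) 1 \ Set.Ioo (x - ε) (x + ε)) volume := by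
  obtain ⟨C, hC⟩ := (isCompact_Icc (a := (-1:ℝ)) (b := 1)).exists_bound_of_continuousOn
    p.continuous.continuousOn
  have hg : IntegrableOn (fun t : ℝ => (max C 0 / ε) * (1 / Real.sqrt (1 - t^2)))
      (Ioo (-1) 1 \ Set.Ioo (x - ε) (x + ε)) volume := by
    have hw : IntegrableOn (fun t : ℝ => (max C 0 / ε) * (1 / Real.sqrt (1 - t^2)))
        (Ioo (-1:ℝ) 1) volume := integrableOn_weight.const_mul _
    exact hw.mono_set diff_subset
  apply MeasureTheory.Integrable.mono hg
  · exact ((p.continuous.measurable.div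
      ((Real.continuous_sqrt.comp (by continuity)).mul (by continuity)).measurable)).aestronglyMeasurable
  · rw [ae_restrict_iff' (measurableSet_Ioo.diff measurableSet_Ioo)]
    filter_upwards with t ht
    obtain ⟨ht1, ht2⟩ := ht
    have h1 : (0:ℝ) < 1 - t^2 := by nlinarith [ht1.1, ht1.2]
    have hs : 0 < Real.sqrt (1 - t^2) := Real.sqrt_pos.2 h1
    have htx : ε ≤ |t - x| := by
      simp only [mem_Ioo, not_and, not_lt] at ht2
      rcases le_or_gt t (x - ε) with h | h
      · rw [abs_of_nonpos (by linarith)]; linarith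
      · have := ht2 h; rw [abs_of_nonneg (by linarith)]; linarith
    have htx0 : t ≠ x := by intro h; rw [h] at htx; simp at htx; linarith
    have hb : |p.eval t| ≤ max C 0 := le_trans (hC t ⟨ht1.1.le, ht1.2.le⟩) (le_max_left _ _)
    have habs : 0 < |t - x| := abs_pos.2 (sub_ne_zero.2 htx0)
    rw [Real.norm_eq_abs, Real.norm_eq_abs,
      abs_of_nonneg (show (0:ℝ) ≤ (max C 0)/ε * (1/Real.sqrt (1-t^2)) by positivity),
      abs_div, abs_mul (Real.sqrt (1-t^2)) (t-x), abs_of_pos hs,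
      div_le_iff₀ (mul_pos hs habs)]
    have heq : (max C 0)/ε * (1/Real.sqrt (1-t^2)) * (Real.sqrt (1-t^2) * |t-x|)
        = (max C 0)/ε * |t-x| := by field_simp
    rw [heq]
    calc |p.eval t| ≤ max C 0 := hb
      _ = (max C 0)/ε * ε := (div_mul_cancel₀ _ hε.ne').symm
      _ ≤ (max C 0)/ε * |t-x| := mul_le_mul_of_nonneg_left htx (by positivity)

lemma pv_kernel {x : ℝ} (hx : x ∈ Ioo (-1:ℝ) 1) :
    IsPVOn (fun t => 1 / (Real.sqrt (1 - t ^ 2) * (t - x))) (Ioo (-1) 1) x 0 := by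
  have hx2 : (0:ℝ) < 1 - x^2 := by nlinarith [hx.1, hx.2]
  set b := Real.sqrt (1-x^2) with hbdef
  have hb : 0 < b := Real.sqrt_pos.2 hx2
  have hb2 : b^2 = 1 - x^2 := Real.sq_sqrt hx2.le
  set D : ℝ → ℝ := fun t => 1 - x*t + b * Real.sqrt (1 - t^2) with hDdef
  have hDpos : ∀ t ∈ Icc (-1:ℝ) 1, 0 < D t := by
    intro t ht
    have h1 : x*t < 1 := by nlinarith [sq_nonneg (x - t), sq_nonneg (x + t), ht.1, ht.2]
    have h2 : 0 ≤ b * Real.sqrt (1 - t^2) := by positivity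
    simp only [hDdef]; nlinarith
  have hDcont : Continuous D := by
    apply Continuous.add (by continuity)
    exact continuous_const.mul (Real.continuous_sqrt.comp (by continuity))
  -- derivatives
  have hder : ∀ t ∈ Ioo (-1:ℝ) 1, t ≠ x →
      HasDerivAt D (-x + b * (-(2*t) / (2 * Real.sqrt (1 - t^2)))) t := by
    intro t ht _
    have ht2 : (0:ℝ) < 1 - t^2 := by nlinarith [ht.1, ht.2]
    have hsq : HasDerivAt (fun s : ℝ => Real.sqrt (1 - s^2))
        (-(2*t) / (2 * Real.sqrt (1 - t^2))) t := by
      have h1 : HasDerivAt (fun s : ℝ => 1 - s^2) (-(2*t)) t := by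
        simpa using ((hasDerivAt_pow 2 t).const_sub 1)
      exact h1.sqrt ht2.ne'
    have h1 : HasDerivAt (fun s : ℝ => 1 - x*s) (-x) t := by
      simpa using ((hasDerivAt_id t).const_mul x).const_sub 1
    exact h1.add (hsq.const_mul b)
  have keyid : ∀ t ∈ Ioo (-1:ℝ) 1, t ≠ x →
      (1/b) * ((if t < x then (-1 : ℝ) / (x - t) else 1 / (t - x))
        - (-x + b * (-(2*t) / (2 * Real.sqrt (1 - t^2)))) / D t)
      = 1 / (Real.sqrt (1 - t^2) * (t - x)) := by
    intro t ht htx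
    have ht2 : (0:ℝ) < 1 - t^2 := by nlinarith [ht.1, ht.2]
    set a := Real.sqrt (1-t^2) with hadef
    have ha : 0 < a := Real.sqrt_pos.2 ht2
    have ha2 : a^2 = 1 - t^2 := Real.sq_sqrt ht2.le
    have hD : 0 < 1 - x*t + b * a := by nlinarith [sq_nonneg (x - t)]
    have htx0 : t - x ≠ 0 := sub_ne_zero.2 htx
    have hxt0 : x - t ≠ 0 := sub_ne_zero.2 (Ne.symm htx)
    have hif : (if t < x then (-1 : ℝ) / (x - t) else 1 / (t - x)) = 1 / (t - x) := by
      split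
      · rw [div_eq_div_iff hxt0 htx0]; ring
      · rfl
    rw [hif]
    simp only [hDdef]
    have hI : (1 - x*t + b*a) * (1 - x*t + b*a)⁻¹ = 1 := mul_inv_cancel₀ hD.ne'
    field_simp
    linear_combination (b - a) * hI + (-(a * (1 - x*t + b*a)⁻¹)) * hb2
      + (b * (1 - x*t + b*a)⁻¹) * ha2
  -- antiderivatives on the two sides
  have hFl : ∀ t ∈ Ioo (-1:ℝ) 1, t < x →
      HasDerivAt (fun s => (1/b) * (Real.log (x - s) - Real.log (D s)))
        (1 / (Real.sqrt (1 - t^2) * (t - x))) t := by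
    intro t ht htx
    have hD : 0 < D t := hDpos t ⟨ht.1.le, ht.2.le⟩
    have hlog1 : HasDerivAt (fun s : ℝ => Real.log (x - s)) (-1 / (x - t)) t := by
      have h1 : HasDerivAt (fun s : ℝ => x - s) (-1) t := by
        simpa using (hasDerivAt_id t).const_sub x
      simpa using h1.log (by linarith : x - t ≠ 0)
    have hlog2 := (hder t ht htx.ne).log hD.ne'
    have := (hlog1.sub hlog2).const_mul (1/b)
    refine this.congr_deriv ?_
    have := keyid t ht htx.ne
    rw [if_pos htx] at this
    rw [← this]
  have hFr : ∀ t ∈ Ioo (-1:ℝ) 1, x < t →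
      HasDerivAt (fun s => (1/b) * (Real.log (s - x) - Real.log (D s)))
        (1 / (Real.sqrt (1 - t^2) * (t - x))) t := by
    intro t ht htx
    have hD : 0 < D t := hDpos t ⟨ht.1.le, ht.2.le⟩
    have hlog1 : HasDerivAt (fun s : ℝ => Real.log (s - x)) (1 / (t - x)) t := by
      have h1 : HasDerivAt (fun s : ℝ => s - x) (1) t := by
        simpa using (hasDerivAt_id t).sub_const x
      simpa using h1.log (by linarith : t - x ≠ 0)
    have hlog2 := (hder t ht htx.ne').log hD.ne'
    have := (hlog1.sub hlog2).const_mul (1/b)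
    refine this.congr_deriv ?_
    have := keyid t ht htx.ne'
    rw [if_neg (by linarith)] at this
    rw [← this]
  set δ := min (x+1) (1-x) with hδdef
  have hδ : 0 < δ := by
    apply lt_min <;> [linarith [hx.1]; linarith [hx.2]]
  have hstep : ∀ ε ∈ Ioo (0:ℝ) δ,
      (∫ y in Ioo (-1:ℝ) 1 \ Set.Ioo (x-ε) (x+ε), 1 / (Real.sqrt (1 - y ^ 2) * (y - x)))
      = (1/b) * (Real.log (D (x+ε)) - Real.log (D (x-ε))) := by
    intro ε hε
    have hε0 := hε.1
    have h1 : -1 < x - ε := by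
      have := hε.2; have := min_le_left (x+1) (1-x); simp only [hδdef] at *; linarith
    have h2 : x + ε < 1 := by
      have := hε.2; have := min_le_right (x+1) (1-x); simp only [hδdef] at *; linarith
    have hset : Ioo (-1:ℝ) 1 \ Set.Ioo (x-ε) (x+ε) = Ioc (-1) (x-ε) ∪ Ico (x+ε) 1 := by
      ext t
      simp only [mem_diff, mem_Ioo, mem_union, mem_Ioc, mem_Ico, not_and, not_lt]
      constructor
      · rintro ⟨⟨ha1, ha2⟩, ha3⟩
        rcases le_or_gt t (x-ε) with h|h
        · exact Or.inl ⟨ha1, h⟩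
        · exact Or.inr ⟨ha3 h, ha2⟩
      · rintro (⟨ha1, ha2⟩|⟨ha1, ha2⟩)
        · exact ⟨⟨ha1, by linarith⟩, fun h => by linarith⟩
        · exact ⟨⟨by linarith, ha2⟩, fun h => by linarith⟩
    have hsub1 : Ioc (-1:ℝ) (x-ε) ⊆ Ioo (-1:ℝ) 1 \ Set.Ioo (x-ε) (x+ε) := by
      rw [hset]; exact subset_union_left
    have hsub2 : Ico (x+ε) (1:ℝ) ⊆ Ioo (-1:ℝ) 1 \ Set.Ioo (x-ε) (x+ε) := by
      rw [hset]; exact subset_union_right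
    have hint0 : IntegrableOn (fun t : ℝ => 1 / (Real.sqrt (1 - t ^ 2) * (t - x)))
        (Ioo (-1) 1 \ Set.Ioo (x - ε) (x + ε)) volume := by
      have := integrableOn_sing 1 x hε0
      simpa using this
    have hint1 := hint0.mono_set hsub1
    have hint2 := hint0.mono_set hsub2
    have hdisj : Disjoint (Ioc (-1:ℝ) (x-ε)) (Ico (x+ε) 1) := by
      rw [Set.disjoint_left]
      rintro t ⟨_, ht2⟩ ⟨ht3, _⟩
      linarith
    rw [hset, setIntegral_union hdisj measurableSet_Ico hint1 hint2]
    -- left piece via FTC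
    have hle1 : (-1:ℝ) ≤ x - ε := h1.le
    have hL : ∫ y in Ioc (-1:ℝ) (x-ε), 1 / (Real.sqrt (1 - y ^ 2) * (y - x))
        = (1/b) * (Real.log (x - (x-ε)) - Real.log (D (x-ε)))
          - (1/b) * (Real.log (x - (-1)) - Real.log (D (-1))) := by
      rw [← intervalIntegral.integral_of_le hle1]
      apply intervalIntegral.integral_eq_sub_of_hasDerivAt_of_le
        (f := fun s => (1/b) * (Real.log (x - s) - Real.log (D s))) hle1
      · apply ContinuousOn.mul continuousOn_const
        apply ContinuousOn.sub
        · apply ContinuousOn.log (continuous_const.sub continuous_id).continuousOn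
          rintro s ⟨_, hs2⟩
          have : ε ≤ x - s := by linarith
          exact (by linarith : (0:ℝ) < x - s).ne'
        · apply ContinuousOn.log hDcont.continuousOn
          rintro s ⟨hs1, hs2⟩
          exact (hDpos s ⟨hs1, by linarith⟩).ne'
      · rintro t ⟨ht1, ht2⟩
        exact hFl t ⟨ht1, by linarith⟩ (by linarith)
      · rw [intervalIntegrable_iff_integrableOn_Ioo_of_le hle1]
        exact hint1.mono_set Ioo_subset_Ioc_self
    have hle2 : x + ε ≤ (1:ℝ) := h2.le
    have hR : ∫ y in Ico (x+ε) (1:ℝ), 1 / (Real.sqrt (1 - y ^ 2) * (y - x))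
        = (1/b) * (Real.log ((1:ℝ) - x) - Real.log (D 1))
          - (1/b) * (Real.log ((x+ε) - x) - Real.log (D (x+ε))) := by
      rw [integral_Ico_eq_integral_Ioo, ← integral_Ioc_eq_integral_Ioo,
        ← intervalIntegral.integral_of_le hle2]
      apply intervalIntegral.integral_eq_sub_of_hasDerivAt_of_le
        (f := fun s => (1/b) * (Real.log (s - x) - Real.log (D s))) hle2
      · apply ContinuousOn.mul continuousOn_const
        apply ContinuousOn.sub
        · apply ContinuousOn.log (continuous_id.sub continuous_const).continuousOn
          rintro s ⟨hs1, _⟩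
          have : ε ≤ s - x := by linarith
          exact (by linarith : (0:ℝ) < s - x).ne'
        · apply ContinuousOn.log hDcont.continuousOn
          rintro s ⟨hs1, hs2⟩
          exact (hDpos s ⟨by linarith, hs2⟩).ne'
      · rintro t ⟨ht1, ht2⟩
        exact hFr t ⟨by linarith, ht2⟩ (by linarith)
      · rw [intervalIntegrable_iff_integrableOn_Ioo_of_le hle2]
        apply hint2.mono_set
        intro t ht; exact ⟨ht.1.le, ht.2⟩
    rw [hL, hR]
    have e1 : x - (x - ε) = ε := by ring
    have e2 : x + ε - x = ε := by ring
    have e3 : x - (-1:ℝ) = 1 + x := by ring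
    have hD1 : D 1 = 1 - x := by norm_num [hDdef]
    have hDm1 : D (-1) = 1 + x := by norm_num [hDdef]
    rw [e1, e2, e3, hD1, hDm1]
    ring
  -- limit of the explicit formula
  have hDx : 0 < D x := hDpos x ⟨hx.1.le, hx.2.le⟩
  have hcont : ContinuousAt (fun ε : ℝ => (1/b) * (Real.log (D (x+ε)) - Real.log (D (x-ε)))) 0 := by
    have c1 : Continuous fun ε : ℝ => D (x+ε) := hDcont.comp (continuous_const.add continuous_id)
    have c2 : Continuous fun ε : ℝ => D (x-ε) := hDcont.comp (continuous_const.sub continuous_id)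
    apply ContinuousAt.mul continuousAt_const
    apply ContinuousAt.sub
    · exact (Real.continuousAt_log (by simpa using hDx.ne')).comp c1.continuousAt
    · exact (Real.continuousAt_log (by simpa using hDx.ne')).comp c2.continuousAt
  have htendsto : Tendsto (fun ε : ℝ => (1/b) * (Real.log (D (x+ε)) - Real.log (D (x-ε))))
      (nhdsWithin 0 (Set.Ioi 0)) (nhds 0) := by
    have := hcont.tendsto.mono_left (nhdsWithin_le_nhds (s := Set.Ioi (0:ℝ)))
    simpa using this
  apply htendsto.congr'
  filter_upwards [Ioo_mem_nhdsGT_of_mem (by constructor <;> [rfl; exact hδ] : (0:ℝ) ∈ Ico 0 δ)] with ε hε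
  exact (hstep ε hε).symm

lemma cheb_pv {x : ℝ} (hx : x ∈ Ioo (-1:ℝ) 1) (n : ℕ) :
    IsPVOn (fun t => (Polynomial.Chebyshev.T ℝ (n:ℤ)).eval t / (Real.sqrt (1 - t ^ 2) * (t - x)))
      (Ioo (-1) 1) x (π * (Polynomial.Chebyshev.U ℝ ((n:ℤ) - 1)).eval x) := by
  induction n using Nat.strong_induction_on with
  | _ n ih => ?_
  match n, ih with
  | 0, _ => ?_
  | 1, _ => ?_
  | (n+2), ih => ?_
  -- case 0
  · have h := pv_kernel hx
    have : π * (Polynomial.Chebyshev.U ℝ ((0:ℤ) - 1)).eval x = 0 := by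
      norm_num [Polynomial.Chebyshev.U_neg_one]
    rw [show ((0:ℕ):ℤ) = 0 by norm_num, this]
    have heq : (fun t : ℝ => (Polynomial.Chebyshev.T ℝ (0:ℤ)).eval t /
        (Real.sqrt (1 - t ^ 2) * (t - x)))
        = fun t : ℝ => 1 / (Real.sqrt (1 - t ^ 2) * (t - x)) := by
      funext t; simp [Polynomial.Chebyshev.T_zero]
    rw [heq]; exact h
  -- case 1
  · have hker := pv_kernel hx
    have hw := isPVOn_of_integrableOn (f := fun t : ℝ => 1 / Real.sqrt (1 - t^2))
      measurableSet_Ioo x integrableOn_weight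
    rw [integral_weight] at hw
    have hval : π * (Polynomial.Chebyshev.U ℝ (((1:ℕ):ℤ) - 1)).eval x = π + x * 0 := by
      norm_num [Polynomial.Chebyshev.U_zero]
    unfold IsPVOn
    rw [hval]
    apply Tendsto.congr' _ (hw.add (hker.const_mul x))
    filter_upwards [self_mem_nhdsWithin] with ε hε
    have hε0 : (0:ℝ) < ε := hε
    have hmeas : MeasurableSet (Ioo (-1:ℝ) 1 \ Set.Ioo (x-ε) (x+ε)) :=
      measurableSet_Ioo.diff measurableSet_Ioo
    have h1 : IntegrableOn (fun t : ℝ => 1 / Real.sqrt (1 - t^2))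
        (Ioo (-1:ℝ) 1 \ Set.Ioo (x-ε) (x+ε)) volume := integrableOn_weight.mono_set diff_subset
    have h2 : IntegrableOn (fun t : ℝ => x * (1 / (Real.sqrt (1 - t^2) * (t - x))))
        (Ioo (-1:ℝ) 1 \ Set.Ioo (x-ε) (x+ε)) volume := by
      have h3 := integrableOn_sing 1 x hε0
      simp only [Polynomial.eval_one] at h3
      exact h3.const_mul x
    show (∫ y in Ioo (-1:ℝ) 1 \ Set.Ioo (x-ε) (x+ε), 1 / Real.sqrt (1 - y^2))
        + x * (∫ y in Ioo (-1:ℝ) 1 \ Set.Ioo (x-ε) (x+ε), 1 / (Real.sqrt (1 - y^2) * (y - x)))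
      = ∫ y in Ioo (-1:ℝ) 1 \ Set.Ioo (x-ε) (x+ε),
          (Polynomial.Chebyshev.T ℝ ((1:ℕ):ℤ)).eval y / (Real.sqrt (1 - y ^ 2) * (y - x))
    rw [← MeasureTheory.integral_const_mul, ← integral_add h1 h2]
    apply setIntegral_congr_fun hmeas
    intro t ht
    have ht2 : (0:ℝ) < 1 - t^2 := by nlinarith [ht.1.1, ht.1.2]
    have hs : 0 < Real.sqrt (1 - t^2) := Real.sqrt_pos.2 ht2
    have htx : t ≠ x := by
      intro h; exact ht.2 (by rw [h]; exact ⟨by linarith, by linarith⟩)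
    have htx0 : t - x ≠ 0 := sub_ne_zero.2 htx
    simp only [show ((1:ℕ):ℤ) = 1 by norm_num, Polynomial.Chebyshev.T_one, Polynomial.eval_X]
    field_simp
    ring
  -- step
  · have hPn := ih n (by omega)
    have hPn1 := ih (n+1) (by omega)
    have hc1 : (((n+1):ℕ):ℤ) = (n:ℤ)+1 := by push_cast; ring
    have hc2 : (((n+2):ℕ):ℤ) = (n:ℤ)+2 := by push_cast; ring
    rw [hc1] at hPn1
    rw [show ((n:ℤ)+1-1) = (n:ℤ) by ring] at hPn1
    rw [hc2, show ((n:ℤ)+2-1) = (n:ℤ)+1 by ring]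
    have hA := isPVOn_of_integrableOn measurableSet_Ioo x
      (integrableOn_poly_div_weight (Polynomial.Chebyshev.T ℝ ((n:ℤ)+1)))
    have hTval : (∫ y in Ioo (-1:ℝ) 1,
        (Polynomial.Chebyshev.T ℝ ((n:ℤ)+1)).eval y / Real.sqrt (1 - y^2)) = 0 := by
      have := integral_T (n+1) (by omega)
      rwa [hc1] at this
    rw [hTval] at hA
    have hcomb := ((hA.const_mul 2).add (hPn1.const_mul (2*x))).sub hPn
    have hval : π * (Polynomial.Chebyshev.U ℝ ((n:ℤ)+1)).eval x
        = (2 * 0 + 2*x * (π * (Polynomial.Chebyshev.U ℝ (n:ℤ)).eval x))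
          - π * (Polynomial.Chebyshev.U ℝ ((n:ℤ)-1)).eval x := by
      have hU : Polynomial.Chebyshev.U ℝ ((n:ℤ)+1)
          = 2 * Polynomial.X * Polynomial.Chebyshev.U ℝ (n:ℤ)
            - Polynomial.Chebyshev.U ℝ ((n:ℤ)-1) := by
        have := Polynomial.Chebyshev.U_add_two ℝ ((n:ℤ)-1)
        rw [show ((n:ℤ)-1+2) = (n:ℤ)+1 by ring, show ((n:ℤ)-1+1) = (n:ℤ) by ring] at this
        exact this
      rw [hU]
      simp only [Polynomial.eval_sub, Polynomial.eval_mul, Polynomial.eval_X,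
        Polynomial.eval_ofNat]
      ring
    unfold IsPVOn
    rw [hval]
    apply Tendsto.congr' _ hcomb
    filter_upwards [self_mem_nhdsWithin] with ε hε
    have hε0 : (0:ℝ) < ε := hε
    have hmeas : MeasurableSet (Ioo (-1:ℝ) 1 \ Set.Ioo (x-ε) (x+ε)) :=
      measurableSet_Ioo.diff measurableSet_Ioo
    have hA' : IntegrableOn (fun t : ℝ => 2 * ((Polynomial.Chebyshev.T ℝ ((n:ℤ)+1)).eval t
        / Real.sqrt (1 - t^2))) (Ioo (-1:ℝ) 1 \ Set.Ioo (x-ε) (x+ε)) volume :=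
      ((integrableOn_poly_div_weight (Polynomial.Chebyshev.T ℝ ((n:ℤ)+1))).mono_set
        diff_subset).const_mul 2
    have hB' : IntegrableOn (fun t : ℝ => (2*x) * ((Polynomial.Chebyshev.T ℝ ((n:ℤ)+1)).eval t
        / (Real.sqrt (1 - t^2) * (t - x)))) (Ioo (-1:ℝ) 1 \ Set.Ioo (x-ε) (x+ε)) volume :=
      (integrableOn_sing (Polynomial.Chebyshev.T ℝ ((n:ℤ)+1)) x hε0).const_mul (2*x)
    have hC' : IntegrableOn (fun t : ℝ => (Polynomial.Chebyshev.T ℝ (n:ℤ)).eval t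
        / (Real.sqrt (1 - t^2) * (t - x))) (Ioo (-1:ℝ) 1 \ Set.Ioo (x-ε) (x+ε)) volume :=
      integrableOn_sing (Polynomial.Chebyshev.T ℝ (n:ℤ)) x hε0
    have hpt : ∀ t ∈ Ioo (-1:ℝ) 1 \ Set.Ioo (x-ε) (x+ε),
        (Polynomial.Chebyshev.T ℝ ((n:ℤ)+2)).eval t / (Real.sqrt (1 - t ^ 2) * (t - x))
        = 2 * ((Polynomial.Chebyshev.T ℝ ((n:ℤ)+1)).eval t / Real.sqrt (1 - t^2))
          + (2*x) * ((Polynomial.Chebyshev.T ℝ ((n:ℤ)+1)).eval t / (Real.sqrt (1 - t^2) * (t - x)))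
          - (Polynomial.Chebyshev.T ℝ (n:ℤ)).eval t / (Real.sqrt (1 - t^2) * (t - x)) := by
      intro t ht
      have ht2 : (0:ℝ) < 1 - t^2 := by nlinarith [ht.1.1, ht.1.2]
      have hs : 0 < Real.sqrt (1 - t^2) := Real.sqrt_pos.2 ht2
      have htx : t ≠ x := by
        intro h; exact ht.2 (by rw [h]; exact ⟨by linarith, by linarith⟩)
      have htx0 : t - x ≠ 0 := sub_ne_zero.2 htx
      simp only [Polynomial.Chebyshev.T_add_two, Polynomial.eval_sub, Polynomial.eval_mul,
        Polynomial.eval_X, Polynomial.eval_ofNat]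
      field_simp
      ring
    symm
    calc (∫ y in Ioo (-1:ℝ) 1 \ Set.Ioo (x-ε) (x+ε),
            (Polynomial.Chebyshev.T ℝ ((n:ℤ)+2)).eval y / (Real.sqrt (1 - y ^ 2) * (y - x)))
        = ∫ y in Ioo (-1:ℝ) 1 \ Set.Ioo (x-ε) (x+ε),
            (2 * ((Polynomial.Chebyshev.T ℝ ((n:ℤ)+1)).eval y / Real.sqrt (1 - y^2))
            + (2*x) * ((Polynomial.Chebyshev.T ℝ ((n:ℤ)+1)).eval y / (Real.sqrt (1 - y^2) * (y - x)))
            - (Polynomial.Chebyshev.T ℝ (n:ℤ)).eval y / (Real.sqrt (1 - y^2) * (y - x))) :=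
          setIntegral_congr_fun hmeas hpt
      _ = (∫ y in Ioo (-1:ℝ) 1 \ Set.Ioo (x-ε) (x+ε),
            (2 * ((Polynomial.Chebyshev.T ℝ ((n:ℤ)+1)).eval y / Real.sqrt (1 - y^2))
            + (2*x) * ((Polynomial.Chebyshev.T ℝ ((n:ℤ)+1)).eval y / (Real.sqrt (1 - y^2) * (y - x)))))
          - ∫ y in Ioo (-1:ℝ) 1 \ Set.Ioo (x-ε) (x+ε),
            (Polynomial.Chebyshev.T ℝ (n:ℤ)).eval y / (Real.sqrt (1 - y^2) * (y - x)) :=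
          integral_sub (hA'.add hB') hC'
      _ = ((∫ y in Ioo (-1:ℝ) 1 \ Set.Ioo (x-ε) (x+ε),
            2 * ((Polynomial.Chebyshev.T ℝ ((n:ℤ)+1)).eval y / Real.sqrt (1 - y^2)))
          + ∫ y in Ioo (-1:ℝ) 1 \ Set.Ioo (x-ε) (x+ε),
            (2*x) * ((Polynomial.Chebyshev.T ℝ ((n:ℤ)+1)).eval y / (Real.sqrt (1 - y^2) * (y - x))))
          - ∫ y in Ioo (-1:ℝ) 1 \ Set.Ioo (x-ε) (x+ε),
            (Polynomial.Chebyshev.T ℝ (n:ℤ)).eval y / (Real.sqrt (1 - y^2) * (y - x)) := by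
          rw [integral_add hA' hB']
      _ = (2 * (∫ y in Ioo (-1:ℝ) 1 \ Set.Ioo (x-ε) (x+ε),
            (Polynomial.Chebyshev.T ℝ ((n:ℤ)+1)).eval y / Real.sqrt (1 - y^2))
          + (2*x) * ∫ y in Ioo (-1:ℝ) 1 \ Set.Ioo (x-ε) (x+ε),
            (Polynomial.Chebyshev.T ℝ ((n:ℤ)+1)).eval y / (Real.sqrt (1 - y^2) * (y - x)))
          - ∫ y in Ioo (-1:ℝ) 1 \ Set.Ioo (x-ε) (x+ε),
            (Polynomial.Chebyshev.T ℝ (n:ℤ)).eval y / (Real.sqrt (1 - y^2) * (y - x)) := by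
          rw [MeasureTheory.integral_const_mul, MeasureTheory.integral_const_mul]

/-- Spectral relation for the Hilbert singular operator on weighted Chebyshev
polynomials of the first kind:
`PV∫_{-1}^1 T_m(t)/(√(1-t²)(t-x)) dt = π U_{m-1}(x)` for `m ≥ 1`, `x ∈ (-1,1)`. -/
theorem pv_integral_weighted_chebyshevT (m : ℕ) (hm : 1 ≤ m) (x : ℝ)
    (hx : x ∈ Set.Ioo (-1:ℝ) 1) :
    IsPVOn (fun t => (Polynomial.Chebyshev.T ℝ m).eval t / (Real.sqrt (1 - t ^ 2) * (t - x)))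
      (Set.Ioo (-1) 1) x (π * (Polynomial.Chebyshev.U ℝ ((m : ℤ) - 1)).eval x) :=
  cheb_pv hx m
end

section
/- Let n, l ≥ 1 be distinct integers. If n + l is odd then ∫_{−1}^{1} T_n(x) T_l(x) dx = 0, and if n + l is even then ∫_{−1}^{1} T_n(x) T_l(x) dx = −[1/((n+l+1)(n+l−1)) + 1/((n−l+1)(n−l−1))], where T_n is the Chebyshev polynomial of the first kind. Equivalently, ∫_{0}^{π} cos(nθ) cos(lθ) sin θ dθ equals these values. -/
open MeasureTheory Real Polynomial

lemma sinInt (m : ℝ) : ∫ θ in (0:ℝ)..π, Real.sin (m*θ) = (1 - Real.cos (m*π))/m := by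
  rcases eq_or_ne m 0 with h | h
  · simp [h]
  · rw [intervalIntegral.integral_comp_mul_left _ h, _root_.integral_sin]
    rw [mul_zero, Real.cos_zero, smul_eq_mul]
    field_simp

lemma cosCosSin (a b : ℝ) :
    ∫ θ in (0:ℝ)..π, Real.cos (a*θ) * Real.cos (b*θ) * Real.sin θ
      = ((1 - Real.cos ((a+b+1)*π))/(a+b+1) + (1 - Real.cos ((1-a-b)*π))/(1-a-b)
        + (1 - Real.cos ((a-b+1)*π))/(a-b+1) + (1 - Real.cos ((1-a+b)*π))/(1-a+b))/4 := by
  have key : ∀ θ : ℝ, Real.cos (a*θ) * Real.cos (b*θ) * Real.sin θ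
      = (Real.sin ((a+b+1)*θ) + Real.sin ((1-a-b)*θ)
        + Real.sin ((a-b+1)*θ) + Real.sin ((1-a+b)*θ))/4 := by
    intro θ
    have h1 : (a+b+1)*θ = a*θ + b*θ + θ := by ring
    have h2 : (1-a-b)*θ = θ - (a*θ + b*θ) := by ring
    have h3 : (a-b+1)*θ = (a*θ - b*θ) + θ := by ring
    have h4 : (1-a+b)*θ = θ - (a*θ - b*θ) := by ring
    rw [h1, h2, h3, h4, Real.sin_add, Real.sin_sub, Real.sin_add, Real.sin_sub,
      Real.sin_add, Real.sin_sub, Real.cos_add, Real.cos_sub]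
    ring
  rw [intervalIntegral.integral_congr (fun θ _ => key θ)]
  have I : ∀ m : ℝ, IntervalIntegrable (fun θ => Real.sin (m*θ)) volume 0 π := fun m =>
    (Real.continuous_sin.comp (continuous_const.mul continuous_id)).intervalIntegrable _ _
  rw [intervalIntegral.integral_div]
  rw [intervalIntegral.integral_add (((I _).add (I _)).add (I _)) (I _),
    intervalIntegral.integral_add ((I _).add (I _)) (I _),
    intervalIntegral.integral_add (I _) (I _), sinInt, sinInt, sinInt, sinInt]

lemma cosZPi (k : ℤ) : Real.cos ((k:ℝ)*π) = (-1)^k := by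
  simpa using Real.cos_int_mul_pi_sub 0 k

/-- For distinct integers `n, l ≥ 1`:
if `n + l` is odd then `∫_{-1}^1 T_n T_l dx = 0`, and if `n + l` is even then
`∫_{-1}^1 T_n T_l dx = -(1/((n+l+1)(n+l-1)) + 1/((n-l+1)(n-l-1)))`;
equivalently for `∫_0^π cos(nθ) cos(lθ) sin θ dθ`. -/
theorem integral_chebyshevT_mul (n l : ℕ) (hn : 1 ≤ n) (hl : 1 ≤ l) (hnl : n ≠ l) :
    (Odd (n + l) →
      (∫ x in (-1:ℝ)..1,
          (Polynomial.Chebyshev.T ℝ n).eval x * (Polynomial.Chebyshev.T ℝ l).eval x = 0) ∧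
      (∫ θ in (0:ℝ)..π, Real.cos ((n : ℝ) * θ) * Real.cos ((l : ℝ) * θ) * Real.sin θ = 0)) ∧
    (Even (n + l) →
      (∫ x in (-1:ℝ)..1,
          (Polynomial.Chebyshev.T ℝ n).eval x * (Polynomial.Chebyshev.T ℝ l).eval x
        = -(1 / (((n : ℝ) + l + 1) * ((n : ℝ) + l - 1))
            + 1 / (((n : ℝ) - l + 1) * ((n : ℝ) - l - 1)))) ∧
      (∫ θ in (0:ℝ)..π, Real.cos ((n : ℝ) * θ) * Real.cos ((l : ℝ) * θ) * Real.sin θ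
        = -(1 / (((n : ℝ) + l + 1) * ((n : ℝ) + l - 1))
            + 1 / (((n : ℝ) - l + 1) * ((n : ℝ) - l - 1))))) := by
  set g : ℝ → ℝ := fun x => (Polynomial.Chebyshev.T ℝ n).eval x * (Polynomial.Chebyshev.T ℝ l).eval x with hg
  have hgc : Continuous g :=
    ((Polynomial.Chebyshev.T ℝ n).continuous_aeval).mul ((Polynomial.Chebyshev.T ℝ l).continuous_aeval)
  have hsub : (∫ θ in (0:ℝ)..π, (-Real.sin θ) • g (Real.cos θ))
      = ∫ x in (1:ℝ)..(-1:ℝ), g x := by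
    have := intervalIntegral.integral_comp_smul_deriv
      (f := Real.cos) (f' := fun x => -Real.sin x) (g := g) (a := 0) (b := π)
      (fun x _ => Real.hasDerivAt_cos x) (Real.continuous_sin.neg).continuousOn hgc
    simpa using this
  have heq : (∫ x in (-1:ℝ)..1, g x)
      = ∫ θ in (0:ℝ)..π, Real.cos ((n : ℝ) * θ) * Real.cos ((l : ℝ) * θ) * Real.sin θ := by
    have h2 : (∫ x in (1:ℝ)..(-1:ℝ), g x) = - ∫ x in (-1:ℝ)..1, g x :=
      intervalIntegral.integral_symm _ _
    rw [h2] at hsub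
    have h3 : (∫ x in (-1:ℝ)..1, g x)
        = ∫ θ in (0:ℝ)..π, -((-Real.sin θ) • g (Real.cos θ)) := by
      rw [intervalIntegral.integral_neg, hsub, neg_neg]
    rw [h3]
    apply intervalIntegral.integral_congr
    intro θ _
    have h1 : (Polynomial.Chebyshev.T ℝ n).eval (Real.cos θ) = Real.cos ((n:ℝ) * θ) := by
      have := Polynomial.Chebyshev.T_real_cos θ (n : ℤ)
      push_cast at this ⊢; exact this
    have h4 : (Polynomial.Chebyshev.T ℝ l).eval (Real.cos θ) = Real.cos ((l:ℝ) * θ) := by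
      have := Polynomial.Chebyshev.T_real_cos θ (l : ℤ)
      push_cast at this ⊢; exact this
    simp only [hg, smul_eq_mul, h1, h4]
    ring
  rw [heq, cosCosSin]
  have c1 : Real.cos (((n:ℝ)+l+1)*π) = (-1:ℝ)^((n:ℤ)+l+1) := by
    have := cosZPi ((n:ℤ)+l+1); push_cast at this; exact this
  have c2 : Real.cos ((1-(n:ℝ)-l)*π) = (-1:ℝ)^(1-(n:ℤ)-l) := by
    have := cosZPi (1-(n:ℤ)-l); push_cast at this; exact this
  have c3 : Real.cos (((n:ℝ)-l+1)*π) = (-1:ℝ)^((n:ℤ)-l+1) := by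
    have := cosZPi ((n:ℤ)-l+1); push_cast at this; exact this
  have c4 : Real.cos ((1-(n:ℝ)+l)*π) = (-1:ℝ)^(1-(n:ℤ)+l) := by
    have := cosZPi (1-(n:ℤ)+l); push_cast at this; exact this
  rw [c1, c2, c3, c4]
  constructor
  · intro hodd
    obtain ⟨k, hk⟩ := hodd
    have e1 : ((-1:ℝ))^((n:ℤ)+l+1) = 1 := Even.neg_one_zpow ⟨(k:ℤ)+1, by omega⟩
    have e2 : ((-1:ℝ))^(1-(n:ℤ)-l) = 1 := Even.neg_one_zpow ⟨-(k:ℤ), by omega⟩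
    have e3 : ((-1:ℝ))^((n:ℤ)-l+1) = 1 := Even.neg_one_zpow ⟨(n:ℤ)-k, by omega⟩
    have e4 : ((-1:ℝ))^(1-(n:ℤ)+l) = 1 := Even.neg_one_zpow ⟨(k:ℤ)+1-n, by omega⟩
    rw [e1, e2, e3, e4]
    norm_num
  · intro heven
    obtain ⟨k, hk⟩ := heven
    have e1 : ((-1:ℝ))^((n:ℤ)+l+1) = -1 := Odd.neg_one_zpow ⟨(k:ℤ), by omega⟩
    have e2 : ((-1:ℝ))^(1-(n:ℤ)-l) = -1 := Odd.neg_one_zpow ⟨-(k:ℤ), by omega⟩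
    have e3 : ((-1:ℝ))^((n:ℤ)-l+1) = -1 := Odd.neg_one_zpow ⟨(n:ℤ)-k, by omega⟩
    have e4 : ((-1:ℝ))^(1-(n:ℤ)+l) = -1 := Odd.neg_one_zpow ⟨(k:ℤ)-n, by omega⟩
    rw [e1, e2, e3, e4]
    have r1 : (n:ℝ) + l + 1 ≠ 0 := by positivity
    have r2 : (n:ℝ) + l - 1 ≠ 0 := by
      have h1 : (1:ℝ) ≤ (n:ℝ) := by exact_mod_cast hn
      have h2 : (1:ℝ) ≤ (l:ℝ) := by exact_mod_cast hl
      intro h; linarith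
    have hr3 : ((n:ℤ) - l) ≠ -1 := by omega
    have hr4 : ((n:ℤ) - l) ≠ 1 := by omega
    have r3 : (n:ℝ) - l + 1 ≠ 0 := by
      intro h
      exact hr3 (by exact_mod_cast (show ((n:ℤ) - l : ℝ) = -1 by push_cast; linarith))
    have r4 : (n:ℝ) - l - 1 ≠ 0 := by
      intro h
      exact hr4 (by exact_mod_cast (show ((n:ℤ) - l : ℝ) = 1 by push_cast; linarith))
    have r5 : 1 - (n:ℝ) - l ≠ 0 := by intro h; exact r2 (by linarith)
    have r6 : 1 - (n:ℝ) + l ≠ 0 := by intro h; exact r4 (by linarith)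
    constructor <;> field_simp <;> ring
end

section
/- Let k₀, h > 0 and define the complex-valued function G₀ on ℝ by G₀(s) = k₀ h (s² + 1)·coth(πs)·tanh(πs/2) / (1 + k₀ h s (s + i)) for s ≠ 0, and G₀(0) = k₀ h / 2. Then G₀ is continuous on ℝ, G₀(s) ≠ 0 for every real s, and G₀(s) → 1 as s → +∞ and as s → −∞. -/
open Filter Real

private lemma cosh_tendsto_atTop : Tendsto Real.cosh atTop atTop := by
  apply tendsto_atTop_mono (fun x => ?_) (Real.tendsto_exp_atTop.atTop_div_const two_pos)
  rw [Real.cosh_eq]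
  have := (Real.exp_pos (-x)).le
  linarith

private lemma cosh_tendsto_atBot : Tendsto Real.cosh atBot atTop := by
  have h : Real.cosh = Real.cosh ∘ (fun x : ℝ => -x) := by
    funext x; simp [Real.cosh_neg]
  rw [h]
  exact cosh_tendsto_atTop.comp tendsto_neg_atBot_atTop

private lemma inv_tendsto_atBot_zero : Tendsto (fun s : ℝ => s⁻¹) atBot (nhds 0) := by
  have h1 : Tendsto (fun s : ℝ => (-s)⁻¹) atBot (nhds 0) :=
    tendsto_inv_atTop_zero.comp tendsto_neg_atBot_atTop
  have h2 : (fun s : ℝ => s⁻¹) = fun s : ℝ => -(-s)⁻¹ := by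
    funext s; rw [inv_neg, neg_neg]
  rw [h2]
  simpa using h1.neg

set_option maxHeartbeats 1600000 in
/-- The Case A factor
`G₀(s) = k₀h(s²+1) coth(πs) tanh(πs/2) / (1 + k₀hs(s+i))` (value `k₀h/2` at `s = 0`)
is continuous and nonvanishing on `ℝ` and tends to `1` at `±∞`. -/
theorem caseA_factor_continuous_nonvanishing_tendsto_one
    (k₀ h : ℝ) (hk₀ : 0 < k₀) (hh : 0 < h)
    (G₀ : ℝ → ℂ)
    (hG₀ : ∀ s : ℝ, s ≠ 0 →
      G₀ s = ((k₀ * h * (s ^ 2 + 1)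
            * (Real.cosh (π * s) / Real.sinh (π * s))
            * (Real.sinh (π * s / 2) / Real.cosh (π * s / 2)) : ℝ) : ℂ)
          / (1 + (k₀ * h * s : ℂ) * ((s : ℂ) + Complex.I)))
    (hG₀0 : G₀ 0 = ((k₀ * h / 2 : ℝ) : ℂ)) :
    Continuous G₀ ∧
    (∀ s : ℝ, G₀ s ≠ 0) ∧
    Tendsto G₀ atTop (nhds 1) ∧
    Tendsto G₀ atBot (nhds 1) := by
  have hcosh := Real.cosh_pos
  -- the regularized hyperbolic factor
  set c : ℝ → ℝ := fun s => Real.cosh (π * s) / (2 * Real.cosh (π * s / 2) ^ 2) with hc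
  have hcpos : ∀ s, 0 < c s := fun s => div_pos (hcosh _) (by positivity)
  -- the denominator never vanishes
  have hD : ∀ s : ℝ, (1 + (k₀ * h * s : ℂ) * ((s : ℂ) + Complex.I)) ≠ 0 := by
    intro s
    rcases eq_or_ne s 0 with rfl | hs
    · simp
    · intro H
      have him : (1 + (k₀ * h * s : ℂ) * ((s : ℂ) + Complex.I)).im = 0 := by rw [H]; simp
      simp [Complex.add_im, Complex.mul_im] at him
      rcases him with him | him | him <;> simp_all [hk₀.ne', hh.ne']
  -- the regular model function
  set F : ℝ → ℂ := fun s =>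
      ((k₀ * h * (s ^ 2 + 1) * c s : ℝ) : ℂ)
        / (1 + (k₀ * h * s : ℂ) * ((s : ℂ) + Complex.I)) with hF
  -- G₀ agrees with F everywhere
  have hGF : G₀ = F := by
    funext s
    rcases eq_or_ne s 0 with rfl | hs
    · rw [hG₀0, hF]
      norm_num [hc, Real.cosh_zero]
      ring
    · rw [hG₀ s hs, hF]
      congr 2
      have h2 : π * s = 2 * (π * s / 2) := by ring
      have hsinh : Real.sinh (π * s / 2) ≠ 0 := by
        simp [Real.sinh_eq_zero, pi_ne_zero, hs]
      have hch : Real.cosh (π * s / 2) ≠ 0 := (hcosh _).ne'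
      rw [h2, Real.sinh_two_mul]
      rw [hc]
      field_simp
  -- numerator of F is nonzero
  have hNum : ∀ s : ℝ, (k₀ * h * (s ^ 2 + 1) * c s : ℝ) ≠ 0 := by
    intro s
    have h0 : 0 < k₀ * h * (s ^ 2 + 1) * c s := by
      have := hcpos s
      positivity
    exact h0.ne'
  -- key limit lemma, uniform in the filter
  have key : ∀ l : Filter ℝ, Tendsto (fun s : ℝ => s⁻¹) l (nhds 0) →
      (∀ᶠ s in l, s ≠ 0) →
      Tendsto (fun s : ℝ => Real.cosh (π * s / 2)) l atTop →
      Tendsto F l (nhds 1) := by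
    intro l hinv hne hch
    have hKC : ((k₀ : ℂ) * h) ≠ 0 := by
      intro H
      have : (k₀ : ℝ) * h = 0 := by exact_mod_cast H
      exact (mul_pos hk₀ hh).ne' this
    -- c tends to 1
    have hcform : ∀ s : ℝ, c s = 1 - (2 * Real.cosh (π * s / 2) ^ 2)⁻¹ := by
      intro s
      have h2 : π * s = 2 * (π * s / 2) := by ring
      rw [hc]
      simp only
      rw [h2, Real.cosh_two_mul, Real.cosh_sq]
      have hch0 : Real.cosh (π * s / 2) ≠ 0 := (hcosh _).ne'
      field_simp
      rw [Real.cosh_sq]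
      ring
    have hsq : Tendsto (fun s : ℝ => 2 * Real.cosh (π * s / 2) ^ 2) l atTop := by
      have h2 := hch.atTop_mul_atTop₀ hch
      have h3 := h2.const_mul_atTop (two_pos (α := ℝ))
      simpa [sq] using h3
    have hc1 : Tendsto c l (nhds 1) := by
      have h0 : Tendsto (fun s : ℝ => (2 * Real.cosh (π * s / 2) ^ 2)⁻¹) l (nhds 0) :=
        hsq.inv_tendsto_atTop
      have h1 := h0.const_sub 1
      rw [sub_zero] at h1
      exact (tendsto_congr hcform).mpr h1
    have hc1C : Tendsto (fun s : ℝ => ((c s : ℝ) : ℂ)) l (nhds 1) := by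
      have := (Complex.continuous_ofReal.tendsto 1).comp hc1
      simpa [Function.comp_def] using this
    -- inverse tends to 0 in ℂ
    have huC : Tendsto (fun s : ℝ => ((s : ℂ))⁻¹) l (nhds 0) := by
      have := (Complex.continuous_ofReal.tendsto 0).comp hinv
      simpa [Function.comp_def, Complex.ofReal_inv] using this
    -- the rational factor tends to 1
    have hQ : Tendsto (fun s : ℝ => ((k₀ * h * (s ^ 2 + 1) : ℝ) : ℂ)
        / (1 + (k₀ * h * s : ℂ) * ((s : ℂ) + Complex.I))) l (nhds 1) := by
      have hnum : Tendsto (fun s : ℝ => (k₀ : ℂ) * h * (1 + ((s : ℂ)⁻¹) ^ 2)) l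
          (nhds ((k₀ : ℂ) * h)) := by
        have := ((huC.pow 2).const_add 1).const_mul ((k₀ : ℂ) * h)
        simpa using this
      have hden : Tendsto (fun s : ℝ => ((s : ℂ)⁻¹) ^ 2 + (k₀ : ℂ) * h
          + Complex.I * ((k₀ : ℂ) * h) * (s : ℂ)⁻¹) l (nhds ((k₀ : ℂ) * h)) := by
        have := ((huC.pow 2).add_const ((k₀ : ℂ) * h)).add
          (huC.const_mul (Complex.I * ((k₀ : ℂ) * h)))
        simpa using this
      have hdiv := hnum.div hden hKC
      rw [div_self hKC] at hdiv
      apply hdiv.congr'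
      filter_upwards [hne] with s hs
      have hsC : (s : ℂ) ≠ 0 := Complex.ofReal_ne_zero.mpr hs
      have hpow : ((s : ℂ)⁻¹) ^ 2 ≠ 0 := pow_ne_zero 2 (inv_ne_zero hsC)
      have e1 : (k₀ : ℂ) * h * (1 + ((s : ℂ)⁻¹) ^ 2)
          = ((k₀ * h * (s ^ 2 + 1) : ℝ) : ℂ) * ((s : ℂ)⁻¹) ^ 2 := by
        push_cast
        field_simp
      have e2 : ((s : ℂ)⁻¹) ^ 2 + (k₀ : ℂ) * h + Complex.I * ((k₀ : ℂ) * h) * (s : ℂ)⁻¹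
          = (1 + (k₀ * h * s : ℂ) * ((s : ℂ) + Complex.I)) * ((s : ℂ)⁻¹) ^ 2 := by
        field_simp
        ring
      simp only [Pi.div_apply]
      rw [e1, e2, mul_div_mul_right _ _ hpow]
    -- combine
    have hmul := hc1C.mul hQ
    rw [mul_one] at hmul
    apply hmul.congr
    intro s
    rw [hF]
    simp only
    rw [mul_div_assoc']
    congr 1
    push_cast
    ring
  rw [hGF]
  refine ⟨?_, ?_, ?_, ?_⟩
  · -- continuity
    apply Continuous.div
    · apply Complex.continuous_ofReal.comp
      apply Continuous.mul
      · fun_prop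
      · apply Continuous.div (by fun_prop) (by fun_prop)
        intro s
        have := hcosh (π * s / 2)
        positivity
    · fun_prop
    · exact hD
  · -- nonvanishing
    intro s
    exact div_ne_zero (Complex.ofReal_ne_zero.mpr (hNum s)) (hD s)
  · -- at +∞
    apply key atTop tendsto_inv_atTop_zero (eventually_ne_atTop 0)
    apply cosh_tendsto_atTop.comp
    exact ((tendsto_id.const_mul_atTop pi_pos)).atTop_div_const two_pos
  · -- at -∞
    apply key atBot inv_tendsto_atBot_zero (eventually_ne_atBot 0)
    apply cosh_tendsto_atBot.comp
    exact ((tendsto_id.const_mul_atBot pi_pos)).atBot_div_const two_pos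
end
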